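/- arXiv:2006.11038 — 3 statements merged into one kernel-verified Lean document; each statement's English description precedes it below -/
import Mathlib

section
/- For every real ω ≠ 0, the Chang–Cooper weight δ(ω) = 1/ω − 1/(exp(ω) − 1) satisfies 0 < δ(ω) < 1. -/
theorem stmt_2 (ω : ℝ) (hω : ω ≠ 0) :
    0 < 1 / ω - 1 / (Real.exp ω - 1) ∧ 1 / ω - 1 / (Real.exp ω - 1) < 1 := by
  have h1 : ω + 1 < Real.exp ω := Real.add_one_lt_exp hω
  have h2 : -ω + 1 < Real.exp (-ω) := Real.add_one_lt_exp (neg_ne_zero.mpr hω)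
  have hpos : 0 < Real.exp ω := Real.exp_pos ω
  have hneg : Real.exp (-ω) = 1 / Real.exp ω := by rw [Real.exp_neg]; ring
  have hprod : 0 < ω * (Real.exp ω - 1) := by
    rcases hω.lt_or_gt with h | h
    · have : Real.exp ω < 1 := by
        rw [← Real.exp_zero]; exact Real.exp_lt_exp.mpr h
      exact mul_pos_of_neg_of_neg h (by linarith)
    · have : 1 < Real.exp ω := by
        rw [← Real.exp_zero]; exact Real.exp_lt_exp.mpr h
      exact mul_pos h (by linarith)
  have hE : Real.exp ω - 1 ≠ 0 := by
    intro h; rw [h, mul_zero] at hprod; exact lt_irrefl 0 hprod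
  rw [div_sub_div _ _ hω hE]
  constructor
  · exact div_pos (by nlinarith) hprod
  · rw [div_lt_one hprod]
    have key : Real.exp ω * (1 - ω) < 1 := by
      have := mul_lt_mul_of_pos_left h2 hpos
      rw [hneg, mul_one_div, div_self (ne_of_gt hpos)] at this
      nlinarith
    nlinarith
end

section
/- Let h > 0, C > 0, B ∈ ℝ with ω = h B / C ≠ 0 and δ = 1/ω − 1/(exp(ω) − 1). Then ((1/h) C − δ B) / ((1 − δ) B + (1/h) C) = exp(−ω). -/
theorem stmt_6 (h C B ω δ : ℝ) (hh : 0 < h) (hC : 0 < C)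
    (hω : ω = h * B / C) (hω0 : ω ≠ 0)
    (hδ : δ = 1 / ω - 1 / (Real.exp ω - 1)) :
    ((1 / h) * C - δ * B) / ((1 - δ) * B + (1 / h) * C) = Real.exp (-ω) := by
  have hh0 : h ≠ 0 := ne_of_gt hh
  have hC0 : C ≠ 0 := ne_of_gt hC
  set E := Real.exp ω with hE
  have hEpos : 0 < E := Real.exp_pos ω
  have hE0 : E ≠ 0 := ne_of_gt hEpos
  have hE1 : E - 1 ≠ 0 := by
    intro hc
    have : Real.exp ω = Real.exp 0 := by rw [Real.exp_zero]; linarith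
    exact hω0 (Real.exp_injective this)
  have hB : B = ω * C / h := by
    rw [hω]; field_simp
  have hD : (1 - δ) * B + (1 / h) * C = (C / h) * (ω * E / (E - 1)) := by
    rw [hB, hδ]; field_simp; ring
  have hN : (1 / h) * C - δ * B = (C / h) * (ω / (E - 1)) := by
    rw [hB, hδ]; field_simp; ring
  have hDne : (1 - δ) * B + (1 / h) * C ≠ 0 := by
    rw [hD]
    exact mul_ne_zero (div_ne_zero hC0 hh0) (div_ne_zero (mul_ne_zero hω0 hE0) hE1)
  rw [hN, hD, Real.exp_neg, ← hE]
  field_simp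
end

section
/- Let h > 0, C > 0, B ∈ ℝ with ω = hB/C ≠ 0 and δ = 1/ω − 1/(exp(ω)−1). Then both coefficients (1−δ)·B + C/h and C/h − δ·B are strictly positive. -/
theorem stmt_7 (h C B ω δ : ℝ) (hh : 0 < h) (hC : 0 < C)
    (hω : ω = h * B / C) (hω0 : ω ≠ 0)
    (hδ : δ = 1 / ω - 1 / (Real.exp ω - 1)) :
    0 < (1 - δ) * B + C / h ∧ 0 < C / h - δ * B := by
  have hh' : h ≠ 0 := ne_of_gt hh
  have hC' : C ≠ 0 := ne_of_gt hC
  have hB : B = ω * C / h := by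
    rw [hω]; field_simp
  have hE : Real.exp ω - 1 ≠ 0 := by
    intro hcontra
    have : Real.exp ω = Real.exp 0 := by rw [Real.exp_zero]; linarith
    exact hω0 (Real.exp_injective this)
  have hratio : 0 < ω / (Real.exp ω - 1) := by
    rcases lt_or_gt_of_ne hω0 with hneg | hpos
    · have : Real.exp ω < 1 := by
        rw [show (1:ℝ) = Real.exp 0 by simp]
        exact Real.exp_lt_exp.mpr hneg
      exact div_pos_of_neg_of_neg hneg (by linarith)
    · have : 1 < Real.exp ω := by
        rw [show (1:ℝ) = Real.exp 0 by simp]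
        exact Real.exp_lt_exp.mpr hpos
      exact div_pos hpos (by linarith)
  have hexp : 0 < Real.exp ω := Real.exp_pos ω
  constructor
  · have key : (1 - δ) * B + C / h = C / h * (ω / (Real.exp ω - 1) * Real.exp ω) := by
      rw [hδ, hB]; field_simp; ring
    rw [key]
    positivity
  · have key : C / h - δ * B = C / h * (ω / (Real.exp ω - 1)) := by
      rw [hδ, hB]; field_simp; ring
    rw [key]
    positivity
end
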